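/- arXiv:1901.01793 — 8 statements merged into one kernel-verified Lean document; each statement's English description precedes it below -/
import Mathlib

section
/- For an absolutely continuous nonnegative random variable X with finite moment of order m+s-1 (m ≥ 1, s ≥ 2 integers), the m-th moment of the s-iterated distribution induced by X equals μ_{s,m} = C(m+s-1, m)^{-1} · E[X^{m+s-1}] / E[X^{s-1}], where C(n,k) is the binomial coefficient. -/
/-!
Writing the moment as a double integral over `0 < x < t` and exchanging the order of
integration, the inner integral is the Beta integral
`∫₀ᵗ xᵐ (t - x)ᵏ dx = m! k! / (m + k + 1)! · t^(m+k+1)` with `k = s - 2`. Hence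
`μ_{s,m} = (s - 1) m! (s - 2)! / (m + s - 1)! · E[X^{m+s-1}] / E[X^{s-1}]`, and the constant
is `C(m + s - 1, m)⁻¹`.
-/

open MeasureTheory Set Real
open scoped Nat

theorem integral_pow_mul_sub_pow (m k : ℕ) (t : ℝ) :
    ∫ x in (0 : ℝ)..t, x ^ m * (t - x) ^ k = m ! * k ! / (m + k + 1)! * t ^ (m + k + 1) := by
  induction k generalizing m with
  | zero =>
    simp only [pow_zero, mul_one, integral_pow, Nat.factorial_succ, add_zero]
    push_cast
    field_simp
    ring
  | succ k ih =>
    have hsplit : ∀ x : ℝ, x ^ m * (t - x) ^ (k + 1)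
        = t * (x ^ m * (t - x) ^ k) - x ^ (m + 1) * (t - x) ^ k := fun x => by ring
    simp_rw [hsplit]
    rw [intervalIntegral.integral_sub ((by fun_prop : Continuous _).intervalIntegrable _ _)
      ((by fun_prop : Continuous _).intervalIntegrable _ _),
      intervalIntegral.integral_const_mul, ih, ih,
      show m + 1 + k + 1 = m + k + 1 + 1 by ring, show m + (k + 1) + 1 = m + k + 1 + 1 by ring]
    simp only [Nat.factorial_succ]
    push_cast
    field_simp
    ring

theorem succ_mul_factorial_mul_factorial_div (m k : ℕ) :
    ((k : ℝ) + 1) * (m ! * k ! / (m + k + 1)!) = ((m + k + 1).choose m : ℝ)⁻¹ := by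
  rw [Nat.cast_choose ℝ (by omega : m ≤ m + k + 1), show m + k + 1 - m = k + 1 by omega,
    Nat.factorial_succ k]
  push_cast
  field_simp

theorem aestronglyMeasurable_of_integrableOn_pow_mul {g : ℝ → ℝ} {n : ℕ}
    (hg : IntegrableOn (fun t => t ^ n * g t) (Ioi 0)) :
    AEStronglyMeasurable g (volume.restrict (Ioi 0)) := by
  refine ((measurable_id.pow_const n).inv.aestronglyMeasurable.mul hg.1).congr ?_
  filter_upwards [ae_restrict_mem measurableSet_Ioi] with t ht
  simp [(pow_pos (mem_Ioi.mp ht) n).ne']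

noncomputable def betaKernel (m k : ℕ) (g : ℝ → ℝ) : ℝ × ℝ → ℝ :=
  {p : ℝ × ℝ | 0 < p.1 ∧ p.1 < p.2}.indicator fun p => p.1 ^ m * (p.2 - p.1) ^ k * g p.2

namespace betaKernel

variable (m k : ℕ) (g : ℝ → ℝ)

theorem apply_left (t : ℝ) :
    (fun x => betaKernel m k g (x, t)) =
      (Ioo 0 t).indicator fun x => x ^ m * (t - x) ^ k * g t := by
  ext x
  simp only [betaKernel, indicator, mem_ofPred_eq, mem_Ioo]

theorem apply_right {x : ℝ} (hx : 0 < x) :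
    (fun t => betaKernel m k g (x, t)) =
      (Ioi x).indicator fun t => x ^ m * (t - x) ^ k * g t := by
  ext t
  simp [betaKernel, indicator, hx]

theorem norm_apply (p : ℝ × ℝ) :
    ‖betaKernel m k g p‖ = betaKernel m k (fun t => |g t|) p := by
  unfold betaKernel
  rw [norm_indicator_eq_indicator_norm]
  refine congrFun (indicator_congr fun q hq => ?_) p
  have : 0 ≤ q.2 - q.1 := by linarith [hq.2]
  simp [abs_of_pos hq.1, abs_of_nonneg this]

theorem integral_left {t : ℝ} (ht : 0 ≤ t) :
    ∫ x in Ioi 0, betaKernel m k g (x, t) =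
      m ! * k ! / (m + k + 1)! * (t ^ (m + k + 1) * g t) := by
  rw [apply_left, integral_indicator measurableSet_Ioo,
    Measure.restrict_restrict measurableSet_Ioo, inter_eq_left.mpr Ioo_subset_Ioi_self,
    ← integral_Ioc_eq_integral_Ioo, ← intervalIntegral.integral_of_le ht,
    intervalIntegral.integral_mul_const, integral_pow_mul_sub_pow]
  ring

theorem integrableOn_left (t : ℝ) :
    IntegrableOn (fun x => betaKernel m k g (x, t)) (Ioi 0) := by
  rw [apply_left, IntegrableOn, integrable_indicator_iff measurableSet_Ioo, IntegrableOn,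
    Measure.restrict_restrict measurableSet_Ioo, inter_eq_left.mpr Ioo_subset_Ioi_self]
  exact ((by fun_prop : Continuous fun x : ℝ => x ^ m * (t - x) ^ k * g t).integrableOn_Icc
    (a := 0) (b := t)).mono_set Ioo_subset_Icc_self

theorem integrable (hg : IntegrableOn (fun t => t ^ (m + k + 1) * g t) (Ioi 0)) :
    Integrable (betaKernel m k g) ((volume.restrict (Ioi 0)).prod (volume.restrict (Ioi 0))) := by
  have hmeas : AEStronglyMeasurable (betaKernel m k g)
      ((volume.restrict (Ioi 0)).prod (volume.restrict (Ioi 0))) :=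
    ((((measurable_fst.pow_const m).mul ((measurable_snd.sub measurable_fst).pow_const k)
      ).aestronglyMeasurable).mul
      (aestronglyMeasurable_of_integrableOn_pow_mul hg).comp_snd).indicator
      ((measurableSet_lt measurable_const measurable_fst).inter
        (measurableSet_lt measurable_fst measurable_snd))
  refine (integrable_prod_iff' hmeas).2 ⟨ae_of_all _ fun t => integrableOn_left m k g t, ?_⟩
  refine (hg.norm.const_mul (m ! * k ! / (m + k + 1)! : ℝ)).congr ?_
  filter_upwards [ae_restrict_mem measurableSet_Ioi] with t ht
  simp_rw [norm_apply, integral_left m k _ (le_of_lt ht), norm_mul,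
    norm_pow, Real.norm_eq_abs, abs_of_pos (mem_Ioi.mp ht)]

end betaKernel

theorem integral_pow_mul_integral_sub_pow_mul (m k : ℕ) (g : ℝ → ℝ)
    (hg : IntegrableOn (fun t => t ^ (m + k + 1) * g t) (Ioi 0)) :
    ∫ x in Ioi 0, x ^ m * ∫ t in Ioi x, (t - x) ^ k * g t
      = m ! * k ! / (m + k + 1)! * ∫ t in Ioi 0, t ^ (m + k + 1) * g t := by
  have hsections : ∫ x in Ioi 0, x ^ m * ∫ t in Ioi x, (t - x) ^ k * g t
      = ∫ x in Ioi 0, ∫ t in Ioi 0, betaKernel m k g (x, t) := by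
    refine setIntegral_congr_fun measurableSet_Ioi fun x hx => ?_
    rw [betaKernel.apply_right m k g hx, integral_indicator measurableSet_Ioi,
      Measure.restrict_restrict measurableSet_Ioi,
      inter_eq_left.mpr (Ioi_subset_Ioi (le_of_lt hx)), ← integral_const_mul]
    simp only [mul_assoc]
  rw [hsections, integral_integral_swap (f := fun x t => betaKernel m k g (x, t))
    (betaKernel.integrable m k g hg), ← integral_const_mul]
  exact setIntegral_congr_fun measurableSet_Ioi fun t ht =>
    betaKernel.integral_left m k g (le_of_lt ht)

theorem iterated_moment_general
    (f : ℝ → ℝ)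
    (m s : ℕ) (hs : 2 ≤ s)
    (hmom : IntegrableOn (fun t => t ^ (m + s - 1) * f t) (Ioi 0)) :
    ∫ x in Ioi (0 : ℝ),
        x ^ m * (((s : ℝ) - 1) / (∫ t in Ioi (0 : ℝ), t ^ (s - 1) * f t) *
          ∫ t in Ioi x, (t - x) ^ (s - 2) * f t)
      = (((m + s - 1).choose m : ℝ))⁻¹ *
          ((∫ t in Ioi (0 : ℝ), t ^ (m + s - 1) * f t) /
           (∫ t in Ioi (0 : ℝ), t ^ (s - 1) * f t)) := by
  obtain ⟨k, rfl⟩ : ∃ k, s = k + 2 := ⟨s - 2, by omega⟩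
  rw [show m + (k + 2) - 1 = m + k + 1 by omega] at hmom ⊢
  simp only [Nat.add_sub_cancel, Nat.add_succ_sub_one, Nat.cast_add, Nat.cast_ofNat]
  set I := ∫ t in Ioi (0 : ℝ), t ^ (k + 1) * f t
  calc _ = ((k : ℝ) + 1) / I * ∫ x in Ioi 0, x ^ m * ∫ t in Ioi x, (t - x) ^ k * f t := by
        rw [← integral_const_mul]
        congr with x
        ring
    _ = ((k : ℝ) + 1) * (m ! * k ! / (m + k + 1)!) *
          (∫ t in Ioi 0, t ^ (m + k + 1) * f t) / I := by
        rw [integral_pow_mul_integral_sub_pow_mul m k f hmom]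
        ring
    _ = _ := by
        rw [succ_mul_factorial_mul_factorial_div]
        ring

/-- The m-th moment of the s-iterated distribution induced by X equals
`C(m+s-1, m)⁻¹ · E[X^{m+s-1}] / E[X^{s-1}]`. -/
theorem iterated_moment
    (f : ℝ → ℝ) (hf_nonneg : ∀ t, 0 ≤ f t)
    (hf_prob : ∫ t in Ioi (0 : ℝ), f t = 1)
    (m s : ℕ) (hm : 1 ≤ m) (hs : 2 ≤ s)
    (hmom : IntegrableOn (fun t => t ^ (m + s - 1) * f t) (Ioi 0)) :
    ∫ x in Ioi (0 : ℝ),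
        x ^ m * (((s : ℝ) - 1) / (∫ t in Ioi (0 : ℝ), t ^ (s - 1) * f t) *
          ∫ t in Ioi x, (t - x) ^ (s - 2) * f t)
      = (((m + s - 1).choose m : ℝ))⁻¹ *
          ((∫ t in Ioi (0 : ℝ), t ^ (m + s - 1) * f t) /
           (∫ t in Ioi (0 : ℝ), t ^ (s - 1) * f t)) :=
  iterated_moment_general f m s hs hmom
end

section
/- If X is an absolutely continuous nonnegative random variable such that the ratio E[X^s]/E[X^{s-1}] is bounded uniformly in s ≥ 1, then the variance σ_s² of the s-iterated distribution induced by X tends to 0 as s → ∞. -/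
open MeasureTheory Set Real Filter Topology

/-! Writing `σ_s² = a_s (b_s - a_s)` with `a_s = r_s / s` and `b_s = 2 r_{s+1} / (s + 1)`, where
`r_s = E[X^s] / E[X^{s-1}]` is positive and bounded, both `a_s` and `b_s` tend to `0`. -/

theorem Filter.Tendsto.zero_mul_of_nonneg_of_eventually_le {ι : Type*} {l : Filter ι}
    {c u : ι → ℝ} {C : ℝ} (hc : Tendsto c l (𝓝 0)) (hu : ∀ i, 0 ≤ u i)
    (huC : ∀ᶠ i in l, u i ≤ C) : Tendsto (fun i => c i * u i) l (𝓝 0) :=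
  hc.zero_mul_isBoundedUnder_le <| isBoundedUnder_of_eventually_le <|
    huC.mono fun i hi => by simpa only [Function.comp, Real.norm_of_nonneg (hu i)] using hi

theorem iterated_variance_tendsto_zero_general
    (f : ℝ → ℝ)
    (hpos : ∀ k : ℕ, 0 < ∫ t in Ioi (0 : ℝ), t ^ k * f t)
    (hbdd : ∃ C : ℝ, ∀ s : ℕ, 1 ≤ s →
      (∫ t in Ioi (0 : ℝ), t ^ s * f t) / (∫ t in Ioi (0 : ℝ), t ^ (s - 1) * f t) ≤ C) :
    Tendsto (fun s : ℕ =>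
      (1 / (s : ℝ)) * ((∫ t in Ioi (0 : ℝ), t ^ s * f t) / (∫ t in Ioi (0 : ℝ), t ^ (s - 1) * f t)) *
        ((2 / ((s : ℝ) + 1)) * ((∫ t in Ioi (0 : ℝ), t ^ (s + 1) * f t) / (∫ t in Ioi (0 : ℝ), t ^ s * f t))
          - (1 / (s : ℝ)) * ((∫ t in Ioi (0 : ℝ), t ^ s * f t) / (∫ t in Ioi (0 : ℝ), t ^ (s - 1) * f t))))
      atTop (nhds 0) := by
  obtain ⟨C, hC⟩ := hbdd
  let r : ℕ → ℝ := fun s =>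
    (∫ t in Ioi (0 : ℝ), t ^ s * f t) / (∫ t in Ioi (0 : ℝ), t ^ (s - 1) * f t)
  have hr_nonneg : ∀ s, 0 ≤ r s := fun s => (div_pos (hpos s) (hpos (s - 1))).le
  have hr_le : ∀ᶠ s in atTop, r s ≤ C := eventually_atTop.2 ⟨1, hC⟩
  have hfirst : Tendsto (fun s : ℕ => 1 / (s : ℝ) * r s) atTop (𝓝 0) :=
    tendsto_one_div_atTop_nhds_zero_nat.zero_mul_of_nonneg_of_eventually_le hr_nonneg hr_le
  have htwo_div : Tendsto (fun s : ℕ => 2 / ((s : ℝ) + 1)) atTop (𝓝 0) := by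
    simpa only [Function.comp_def, Nat.cast_succ] using
      (tendsto_const_div_atTop_nhds_zero_nat (2 : ℝ)).comp (tendsto_add_atTop_nat 1)
  have hsecond : Tendsto (fun s : ℕ => 2 / ((s : ℝ) + 1) * r (s + 1)) atTop (𝓝 0) :=
    htwo_div.zero_mul_of_nonneg_of_eventually_le (fun s => hr_nonneg (s + 1))
      (tendsto_add_atTop_nat 1 hr_le)
  simpa [r] using hfirst.mul (hsecond.sub hfirst)

/-- If the ratio of consecutive moments `E X^s / E X^{s-1}` is uniformly bounded in `s ≥ 1`,
then the variance of the s-iterated distribution tends to 0 as `s → ∞`. -/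
theorem iterated_variance_tendsto_zero
    (f : ℝ → ℝ) (hf_nonneg : ∀ t, 0 ≤ f t)
    (hf_prob : ∫ t in Ioi (0 : ℝ), f t = 1)
    (hmom : ∀ k : ℕ, IntegrableOn (fun t => t ^ k * f t) (Ioi 0))
    (hpos : ∀ k : ℕ, 0 < ∫ t in Ioi (0 : ℝ), t ^ k * f t)
    (hbdd : ∃ C : ℝ, ∀ s : ℕ, 1 ≤ s →
      (∫ t in Ioi (0 : ℝ), t ^ s * f t) / (∫ t in Ioi (0 : ℝ), t ^ (s - 1) * f t) ≤ C) :
    Tendsto (fun s : ℕ =>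
      (1 / (s : ℝ)) * ((∫ t in Ioi (0 : ℝ), t ^ s * f t) / (∫ t in Ioi (0 : ℝ), t ^ (s - 1) * f t)) *
        ((2 / ((s : ℝ) + 1)) * ((∫ t in Ioi (0 : ℝ), t ^ (s + 1) * f t) / (∫ t in Ioi (0 : ℝ), t ^ s * f t))
          - (1 / (s : ℝ)) * ((∫ t in Ioi (0 : ℝ), t ^ s * f t) / (∫ t in Ioi (0 : ℝ), t ^ (s - 1) * f t))))
      atTop (nhds 0) :=
  iterated_variance_tendsto_zero_general f hpos hbdd
end

section
/- If X has the Gamma(2, λ) distribution (density λ²xe^{−λx}), then for every s ≥ 1 the density of the s-iterated distribution induced by X equals g_s(x) = (1/s) λ² x e^{−λx} + ((s-1)/s) λ e^{−λx}. -/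
/-! After the shift `t = x + u`, the Gamma(2, λ) density splits as
`λ² e^{-λx} (u + x) e^{-λu}`, so the tail integral `∫_x^∞ (t - x)^n f(t) dt` is a combination of two
Gamma integrals `∫_0^∞ u^k e^{-λu} du = k!/λ^{k+1}`; so is the moment `E[X^{s-1}]`.
Dividing, the factorials cancel up to the factor `(s - 1)/s`. -/

open MeasureTheory Set Real
open scoped Nat

theorem integral_Ioi_eq_integral_Ioi_zero_comp_add {E : Type*} [NormedAddCommGroup E]
    [NormedSpace ℝ E] (f : ℝ → E) (x : ℝ) :
    ∫ t in Ioi x, f t = ∫ u in Ioi 0, f (u + x) := by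
  rw [← (measurePreserving_add_right volume x).setIntegral_preimage_emb
    (MeasurableEquiv.addRight x).measurableEmbedding f (Ioi x)]
  simp

theorem integrableOn_Ioi_pow_mul_exp_neg_mul {l : ℝ} (hl : 0 < l) (n : ℕ) :
    IntegrableOn (fun t : ℝ => t ^ n * exp (-l * t)) (Ioi 0) := by
  refine (integrableOn_rpow_mul_exp_neg_mul_rpow (p := 1) (s := n)
    (neg_one_lt_zero.trans_le n.cast_nonneg) one_pos hl).congr_fun (fun t _ => ?_) measurableSet_Ioi
  simp only [rpow_natCast, rpow_one]

theorem integral_Ioi_pow_mul_exp_neg_mul {l : ℝ} (hl : 0 < l) (n : ℕ) :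
    ∫ t in Ioi 0, t ^ n * exp (-l * t) = n ! / l ^ (n + 1) := by
  have h := integral_rpow_mul_exp_neg_mul_Ioi (a := n + 1) (by positivity) hl
  simp only [add_sub_cancel_right, rpow_natCast, ← neg_mul] at h
  rw [h, Gamma_nat_eq_factorial, ← Nat.cast_succ, rpow_natCast, div_pow, one_pow]
  field_simp

theorem integral_Ioi_pow_mul_gamma_two_density {l : ℝ} (hl : 0 < l) (n : ℕ) :
    ∫ t in Ioi 0, t ^ n * (l ^ 2 * t * exp (-l * t)) = (n + 1)! / l ^ n := by
  have hpow (t : ℝ) : t ^ n * (l ^ 2 * t * exp (-l * t)) = l ^ 2 * (t ^ (n + 1) * exp (-l * t)) := by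
    ring
  simp_rw [hpow, integral_const_mul, integral_Ioi_pow_mul_exp_neg_mul hl]
  field_simp
  ring

theorem integral_Ioi_sub_pow_mul_gamma_two_density {l : ℝ} (hl : 0 < l) (n : ℕ) (x : ℝ) :
    ∫ t in Ioi x, (t - x) ^ n * (l ^ 2 * t * exp (-l * t))
      = n ! * (n + 1 + l * x) * exp (-l * x) / l ^ n := by
  have hsplit (u : ℝ) : (u + x - x) ^ n * (l ^ 2 * (u + x) * exp (-l * (u + x)))
      = l ^ 2 * exp (-l * x) * (u ^ (n + 1) * exp (-l * u) + x * (u ^ n * exp (-l * u))) := by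
    rw [add_sub_cancel_right, mul_add (-l), exp_add]
    ring
  rw [integral_Ioi_eq_integral_Ioi_zero_comp_add, funext hsplit, integral_const_mul,
    integral_add (integrableOn_Ioi_pow_mul_exp_neg_mul hl _)
      ((integrableOn_Ioi_pow_mul_exp_neg_mul hl _).const_mul x),
    integral_const_mul, integral_Ioi_pow_mul_exp_neg_mul hl, integral_Ioi_pow_mul_exp_neg_mul hl,
    Nat.factorial_succ]
  push_cast
  field_simp
  ring

theorem iterated_density_gamma_two_general (l : ℝ) (hl : 0 < l) (s : ℕ) (hs : 1 ≤ s)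
    (x : ℝ) :
    (if s = 1 then l ^ 2 * x * Real.exp (-l * x)
     else ((s : ℝ) - 1) / (∫ t in Ioi (0 : ℝ), t ^ (s - 1) * (l ^ 2 * t * Real.exp (-l * t))) *
       ∫ t in Ioi x, (t - x) ^ (s - 2) * (l ^ 2 * t * Real.exp (-l * t)))
    = (1 / (s : ℝ)) * l ^ 2 * x * Real.exp (-l * x)
      + (((s : ℝ) - 1) / (s : ℝ)) * l * Real.exp (-l * x) := by
  obtain rfl | ⟨n, rfl⟩ : s = 1 ∨ ∃ n, s = n + 2 := by
    rcases Nat.exists_eq_add_of_le hs with ⟨_ | n, rfl⟩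
    exacts [.inl rfl, .inr ⟨n, by omega⟩]
  · simp
  rw [if_neg (by omega), show n + 2 - 1 = n + 1 by omega, Nat.add_sub_cancel,
    integral_Ioi_pow_mul_gamma_two_density hl, integral_Ioi_sub_pow_mul_gamma_two_density hl]
  push_cast [Nat.factorial_succ]
  field_simp
  ring

/-- The s-iterated density induced by a `Gamma(2, λ)` random variable is
`g_s(x) = (1/s) λ² x e^{-λx} + ((s-1)/s) λ e^{-λx}`. -/
theorem iterated_density_gamma_two (l : ℝ) (hl : 0 < l) (s : ℕ) (hs : 1 ≤ s)
    (x : ℝ) (hx : 0 ≤ x) :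
    (if s = 1 then l ^ 2 * x * Real.exp (-l * x)
     else ((s : ℝ) - 1) / (∫ t in Ioi (0 : ℝ), t ^ (s - 1) * (l ^ 2 * t * Real.exp (-l * t))) *
       ∫ t in Ioi x, (t - x) ^ (s - 2) * (l ^ 2 * t * Real.exp (-l * t)))
    = (1 / (s : ℝ)) * l ^ 2 * x * Real.exp (-l * x)
      + (((s : ℝ) - 1) / (s : ℝ)) * l * Real.exp (-l * x) :=
  iterated_density_gamma_two_general l hl s hs x
end

section
/- Let X have a Gamma(n, λ) distribution with integer shape n ≥ 2. Then for each fixed x ≥ 0, the density g_s(x) of the s-iterated distribution induced by X converges to λe^{−λx} as s → ∞. -/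
open MeasureTheory Set Real Filter

/-- Density of the `Gamma(n, λ)` distribution (integer shape `n ≥ 1`). -/
noncomputable def gammaDens (n : ℕ) (l x : ℝ) : ℝ :=
  l ^ n * x ^ (n - 1) * Real.exp (-l * x) / (n - 1).factorial

/-- Density of the s-iterated distribution induced by a density `g` (for `s ≥ 2`). -/
noncomputable def iterDens (g : ℝ → ℝ) (s : ℕ) (x : ℝ) : ℝ :=
  ((s : ℝ) - 1) / (∫ t in Set.Ioi (0 : ℝ), t ^ (s - 1) * g t) *
    ∫ t in Set.Ioi x, (t - x) ^ (s - 2) * g t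

/-!
Multiplying a density by a nonzero constant does not change its iterated density, so it
suffices to treat `t ^ m * exp (-λ t)`. Substituting `t = x + u` and expanding `(x + u) ^ m`
binomially turns both integrals in `g_{s+2}(x)` into Gamma integrals, which gives
`g_{s+2}(x) = λ e^{-λx} ∑_k (m choose k) (λx)^(m-k) (s+1)(s+k)! / (s+m+1)!`.
The summand with `k = m` tends to `1`; the others are `O(1/s)`.
-/

open scoped Nat Topology

lemma integral_pow_mul_exp_neg_mul_Ioi (m : ℕ) {l : ℝ} (hl : 0 < l) :
    ∫ t in Ioi (0 : ℝ), t ^ m * exp (-l * t) = m ! / l ^ (m + 1) := by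
  have h := integral_rpow_mul_exp_neg_mul_Ioi (a := (m : ℝ) + 1) (by positivity) hl
  simp only [add_sub_cancel_right, rpow_natCast, Gamma_nat_eq_factorial, ← neg_mul] at h
  rw [h, ← Nat.cast_succ, rpow_natCast, one_div, inv_pow, inv_mul_eq_div]

lemma integrableOn_pow_mul_exp_neg_mul_Ioi (m : ℕ) {l : ℝ} (hl : 0 < l) :
    IntegrableOn (fun t : ℝ => t ^ m * exp (-l * t)) (Ioi 0) := by
  refine Integrable.of_integral_ne_zero ?_
  rw [integral_pow_mul_exp_neg_mul_Ioi m hl]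
  positivity

lemma integral_comp_add_right_Ioi (f : ℝ → ℝ) (a d : ℝ) :
    ∫ t in Ioi a, f (t + d) = ∫ t in Ioi (a + d), f t := by
  rw [← image_add_const_Ioi, (measurePreserving_add_right volume d).setIntegral_image_emb
    (Homeomorph.addRight d).isClosedEmbedding.measurableEmbedding]

lemma iterDens_const_mul (g : ℝ → ℝ) {c : ℝ} (hc : c ≠ 0) (s : ℕ) (x : ℝ) :
    iterDens (fun t => c * g t) s x = iterDens g s x := by
  simp only [iterDens, mul_left_comm _ c, integral_const_mul]
  rw [← mul_assoc, mul_div_assoc', mul_div_mul_left _ _ hc]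

lemma integral_Ioi_sub_pow_mul_pow_mul_exp (s m : ℕ) {l : ℝ} (hl : 0 < l) (x : ℝ) :
    ∫ t in Ioi x, (t - x) ^ s * (t ^ m * exp (-l * t))
      = exp (-l * x) * ∑ k ∈ Finset.range (m + 1),
          m.choose k * x ^ (m - k) * ((s + k) ! / l ^ (s + k + 1)) := by
  have expand : ∀ u : ℝ, (u + x - x) ^ s * ((u + x) ^ m * exp (-l * (u + x)))
      = ∑ k ∈ Finset.range (m + 1),
          exp (-l * x) * (m.choose k * x ^ (m - k)) * (u ^ (s + k) * exp (-l * u)) := by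
    intro u
    rw [add_sub_cancel_right, add_pow, mul_add, exp_add, Finset.sum_mul, Finset.mul_sum]
    refine Finset.sum_congr rfl fun k _ => ?_
    ring
  rw [← zero_add x, ← integral_comp_add_right_Ioi, zero_add]
  simp_rw [expand]
  rw [integral_finsetSum _ fun k _ => (integrableOn_pow_mul_exp_neg_mul_Ioi _ hl).const_mul _,
    Finset.mul_sum]
  refine Finset.sum_congr rfl fun k _ => ?_
  rw [integral_const_mul, integral_pow_mul_exp_neg_mul_Ioi _ hl, mul_assoc]

lemma iterDens_pow_mul_exp_add_two (m s : ℕ) {l : ℝ} (hl : 0 < l) (x : ℝ) :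
    iterDens (fun t => t ^ m * exp (-l * t)) (s + 2) x
      = l * exp (-l * x) * ∑ k ∈ Finset.range (m + 1),
          m.choose k * (l * x) ^ (m - k) * ((s + 1) * (s + k) ! / (s + m + 1) !) := by
  have moment : ∫ t in Ioi (0 : ℝ), t ^ (s + 1) * (t ^ m * exp (-l * t))
      = (s + m + 1) ! / l ^ (s + m + 2) := by
    simp_rw [← mul_assoc, ← pow_add]
    rw [integral_pow_mul_exp_neg_mul_Ioi _ hl, add_right_comm s 1 m]
  rw [iterDens, Nat.add_sub_cancel_right, show s + 2 - 1 = s + 1 from rfl, moment,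
    integral_Ioi_sub_pow_mul_pow_mul_exp s m hl x]
  simp only [Finset.mul_sum]
  refine Finset.sum_congr rfl fun k hk => ?_
  obtain ⟨j, rfl⟩ := Nat.exists_eq_add_of_le (Finset.mem_range_succ_iff.mp hk)
  have : ((s + (k + j) + 1) ! : ℝ) ≠ 0 := by positivity
  rw [Nat.add_sub_cancel_left]
  push_cast
  field_simp
  ring

lemma tendsto_succ_mul_factorial_div_factorial {k m : ℕ} (hk : k ≤ m) :
    Tendsto (fun s : ℕ => ((s : ℝ) + 1) * (s + k) ! / (s + m + 1) !) atTop
      (𝓝 (if k = m then 1 else 0)) := by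
  rcases hk.eq_or_lt with rfl | hlt
  · have ratio (s : ℕ) : ((s : ℝ) + 1) * (s + k) ! / (s + k + 1) !
        = ((s + 1 : ℕ) : ℝ) / ((s + 1 : ℕ) + k) := by
      rw [Nat.factorial_succ]
      push_cast
      field_simp
      ring
    rw [if_pos rfl]
    simp only [ratio]
    exact (tendsto_natCast_div_add_atTop (k : ℝ)).comp (tendsto_add_atTop_nat 1)
  · rw [if_neg hlt.ne]
    have bound (s : ℕ) : ((s : ℝ) + 1) * (s + k) ! / (s + m + 1) ! ≤ 1 / ((s : ℝ) + 1) := by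
      have key : (s + k) ! * (s + 1) ^ 2 ≤ (s + m + 1) ! :=
        calc (s + k) ! * (s + 1) ^ 2 ≤ (s + k) ! * (s + k + 1) ^ (m + 1 - k) :=
              Nat.mul_le_mul_left _ ((Nat.pow_le_pow_left (by omega) 2).trans
                (Nat.pow_le_pow_right (by omega) (by omega)))
          _ ≤ (s + k + (m + 1 - k)) ! := Nat.factorial_mul_pow_le_factorial
          _ = (s + m + 1) ! := by congr 1; omega
      rw [div_le_div_iff₀ (by positivity) (by positivity)]
      have : ((s + k) ! : ℝ) * ((s : ℝ) + 1) ^ 2 ≤ (s + m + 1) ! := by exact_mod_cast key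
      nlinarith
    exact tendsto_of_tendsto_of_tendsto_of_le_of_le tendsto_const_nhds
      tendsto_one_div_add_atTop_nhds_zero_nat (fun s => by positivity) bound

lemma tendsto_iterDens_pow_mul_exp (m : ℕ) {l : ℝ} (hl : 0 < l) (x : ℝ) :
    Tendsto (fun s => iterDens (fun t => t ^ m * exp (-l * t)) s x) atTop
      (𝓝 (l * exp (-l * x))) := by
  rw [← tendsto_add_atTop_iff_nat 2]
  simp_rw [iterDens_pow_mul_exp_add_two m _ hl x]
  have terms := tendsto_finsetSum (Finset.range (m + 1)) fun k hk =>
    (tendsto_succ_mul_factorial_div_factorial (Finset.mem_range_succ_iff.mp hk)).const_mul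
      (m.choose k * (l * x) ^ (m - k) : ℝ)
  simpa [Finset.sum_ite_eq'] using terms.const_mul (l * exp (-l * x))

theorem iterated_density_gamma_tendsto_general (n : ℕ) (l : ℝ) (hl : 0 < l) (x : ℝ) :
    Tendsto (fun s : ℕ => iterDens (gammaDens n l) s x) atTop
      (nhds (l * Real.exp (-l * x))) := by
  have scaled : gammaDens n l =
      fun t => l ^ n / (n - 1)! * (t ^ (n - 1) * exp (-l * t)) := by
    funext t
    rw [gammaDens]
    ring
  simpa only [scaled, iterDens_const_mul _ (by positivity : l ^ n / (n - 1)! ≠ 0)]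
    using tendsto_iterDens_pow_mul_exp (n - 1) hl x

/-- For `X ~ Gamma(n, λ)` with integer `n ≥ 2`, the s-iterated density converges
pointwise to the exponential density `λ e^{-λx}` as `s → ∞`. -/
theorem iterated_density_gamma_tendsto (n : ℕ) (hn : 2 ≤ n) (l : ℝ) (hl : 0 < l)
    (x : ℝ) (hx : 0 ≤ x) :
    Tendsto (fun s : ℕ => iterDens (gammaDens n l) s x) atTop
      (nhds (l * Real.exp (-l * x))) :=
  iterated_density_gamma_tendsto_general n l hl x
end

section
/- Let X have a Gamma(α, 1) distribution with integer shape α ≥ 1 and let s ≥ 1 be an integer. Then the (s-1)-th order stop-loss transform satisfies E[(X−x)_+^s] = e^{−x} (s+α−1)!/(α−1)! + e^{−x} ∑_{k=1}^{α−1} ((s+α−1−k)!/(α−1−k)!) x^k/k! for all x ≥ 0. -/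
open MeasureTheory Set Real

/-!
Substituting `t = u + x` turns the stop-loss moment into
`e^{-x} ∫₀^∞ u^s (u + x)^{α-1} e^{-u} du / (α-1)!`. Expanding `(u + x)^{α-1}` binomially
reduces it to the Gamma integrals `∫₀^∞ u^n e^{-u} du = n!`; the term with `x^k` gives the
`k`-th summand, `k = 0` being the leading one.
-/

lemma integrableOn_pow_mul_exp_neg_Ioi (n : ℕ) :
    IntegrableOn (fun t : ℝ => t ^ n * exp (-t)) (Ioi 0) := by
  refine (GammaIntegral_convergent (s := n + 1) (by positivity)).congr_fun (fun t _ => ?_)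
    measurableSet_Ioi
  simp only [add_sub_cancel_right, rpow_natCast, mul_comm]

lemma integral_pow_mul_exp_neg_Ioi (n : ℕ) :
    ∫ t in Ioi (0 : ℝ), t ^ n * exp (-t) = n.factorial := by
  rw [← Gamma_nat_eq_factorial, Gamma_eq_integral (by positivity)]
  refine setIntegral_congr_fun measurableSet_Ioi fun t _ => ?_
  simp only [add_sub_cancel_right, rpow_natCast, mul_comm]

lemma setIntegral_Ioi_comp_add_right {E : Type*} [NormedAddCommGroup E]
    [NormedSpace ℝ E] (f : ℝ → E) (x : ℝ) : ∫ u in Ioi 0, f (u + x) = ∫ t in Ioi x, f t := by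
  have := (measurePreserving_add_right volume x).setIntegral_preimage_emb
    (MeasurableEquiv.addRight x).measurableEmbedding f (Ioi x)
  rwa [preimage_add_const_Ioi, sub_self] at this

lemma setIntegral_Ioi_max_sub_pow_mul {s : ℕ} (hs : s ≠ 0) {x : ℝ} (hx : 0 ≤ x) (f : ℝ → ℝ) :
    ∫ t in Ioi 0, max 0 (t - x) ^ s * f t = ∫ u in Ioi 0, u ^ s * f (u + x) := by
  calc ∫ t in Ioi 0, max 0 (t - x) ^ s * f t
      = ∫ t in Ioi x, max 0 (t - x) ^ s * f t := by
        refine setIntegral_eq_of_subset_of_forall_sdiff_eq_zero measurableSet_Ioi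
          (Ioi_subset_Ioi hx) fun t ht => ?_
        rw [max_eq_left (by simpa using ht.2), zero_pow hs, zero_mul]
    _ = ∫ t in Ioi x, (t - x) ^ s * f t :=
        setIntegral_congr_fun measurableSet_Ioi fun t ht =>
          by rw [max_eq_right (sub_nonneg.2 (le_of_lt ht))]
    _ = ∫ u in Ioi 0, u ^ s * f (u + x) := by
        rw [← setIntegral_Ioi_comp_add_right]
        simp only [add_sub_cancel_right]

lemma integral_pow_mul_add_pow_mul_exp_neg_Ioi (s m : ℕ) (x : ℝ) :
    ∫ u in Ioi (0 : ℝ), u ^ s * ((u + x) ^ m * exp (-(u + x)))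
      = exp (-x) *
          ∑ j ∈ Finset.range (m + 1), x ^ j * m.choose j * (s + (m - j)).factorial := by
  have hexpand : ∀ u : ℝ, u ^ s * ((u + x) ^ m * exp (-(u + x)))
      = ∑ j ∈ Finset.range (m + 1),
          exp (-x) * x ^ j * m.choose j * (u ^ (s + (m - j)) * exp (-u)) := by
    intro u
    rw [add_comm u x, add_pow, neg_add, exp_add, Finset.sum_mul, Finset.mul_sum]
    refine Finset.sum_congr rfl fun j _ => ?_
    rw [pow_add]
    ring
  simp only [hexpand]
  rw [integral_finsetSum _ fun j _ => (integrableOn_pow_mul_exp_neg_Ioi _).const_mul _,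
    Finset.mul_sum]
  refine Finset.sum_congr rfl fun j _ => ?_
  rw [integral_const_mul, integral_pow_mul_exp_neg_Ioi]
  ring

lemma pow_mul_choose_mul_factorial_div_factorial {m j : ℕ} (hj : j ≤ m) (s : ℕ) (x : ℝ) :
    x ^ j * m.choose j * ((s + (m - j)).factorial : ℝ) / m.factorial
      = ((s + m - j).factorial : ℝ) / (m - j).factorial * x ^ j / j.factorial := by
  rw [Nat.cast_choose ℝ hj, ← Nat.add_sub_assoc hj]
  field_simp

lemma sum_range_succ_eq_add_sum_Icc {M : Type*} [AddCommMonoid M] (f : ℕ → M) (m : ℕ) :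
    ∑ j ∈ Finset.range (m + 1), f j = f 0 + ∑ j ∈ Finset.Icc 1 m, f j := by
  rw [Finset.range_eq_Ico, Finset.sum_eq_sum_Ico_succ_bot (by omega : 0 < m + 1), zero_add,
    Finset.Ico_add_one_right_eq_Icc]

/-- Stop-loss transform of a `Gamma(α, 1)` variable with integer shape `α ≥ 1`:
`E[(X-x)_+^s] = e^{-x}(s+α-1)!/(α-1)! + e^{-x} ∑_{k=1}^{α-1} ((s+α-1-k)!/(α-1-k)!) x^k/k!`. -/
theorem gamma_stop_loss (a s : ℕ) (ha : 1 ≤ a) (hs : 1 ≤ s) (x : ℝ) (hx : 0 ≤ x) :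
    ∫ t in Ioi (0 : ℝ), max 0 (t - x) ^ s * (t ^ (a - 1) * Real.exp (-t) / ((a - 1).factorial : ℝ))
      = Real.exp (-x) * (((s + a - 1).factorial : ℝ) / ((a - 1).factorial : ℝ))
        + Real.exp (-x) *
            ∑ k ∈ Finset.Icc 1 (a - 1),
              (((s + a - 1 - k).factorial : ℝ) / ((a - 1 - k).factorial : ℝ)) * x ^ k /
                (k.factorial : ℝ) := by
  obtain ⟨m, rfl⟩ := Nat.exists_eq_add_of_le' ha
  simp only [Nat.add_sub_cancel, Nat.add_succ_sub_one]
  calc ∫ t in Ioi (0 : ℝ), max 0 (t - x) ^ s * (t ^ m * exp (-t) / m.factorial)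
      = (∫ u in Ioi (0 : ℝ), u ^ s * ((u + x) ^ m * exp (-(u + x)))) / m.factorial := by
        rw [← setIntegral_Ioi_max_sub_pow_mul (by omega) hx fun t => t ^ m * exp (-t),
          ← integral_div]
        simp only [mul_div_assoc']
    _ = exp (-x) * ∑ j ∈ Finset.range (m + 1),
          ((s + m - j).factorial : ℝ) / (m - j).factorial * x ^ j / j.factorial := by
        rw [integral_pow_mul_add_pow_mul_exp_neg_Ioi, mul_div_assoc, Finset.sum_div]
        congr 1
        refine Finset.sum_congr rfl fun j hj => ?_
        exact pow_mul_choose_mul_factorial_div_factorial (Finset.mem_range_succ_iff.1 hj) s x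
    _ = _ := by
        rw [sum_range_succ_eq_add_sum_Icc, mul_add]
        simp
end

section
/- If X and Y are nonnegative absolutely continuous random variables with X ≤_{s-FR} Y (i.e., T̄_{Y,s}(x)/T̄_{X,s}(x) is nondecreasing in x ≥ 0), then X ≤_{(s+1)-FR} Y, i.e., T̄_{Y,s+1}(x)/T̄_{X,s+1}(x) is also nondecreasing in x ≥ 0. -/
/-!
Write `A_k(x) = ∫_{t>x} (t-x)^k g(t) dt`, so that `T̄_{k+1} = A_k / A_k(0)`. By Tonelli,
`A_{k+1}(x) = (k+1) ∫_x^∞ A_k(u) du`. Monotonicity of `A^Y_k / A^X_k` is the cross inequality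
`A^Y_k(u) A^X_k(v) ≤ A^Y_k(v) A^X_k(u)` for `u ≤ v`; integrating it over `x < u ≤ y < v` gives
the same inequality for `∫_x^∞ A_k`, i.e. for `A_{k+1}`.
-/

open MeasureTheory Set Real

/-- Tail of the s-iterated distribution induced by a density `g` on `[0, ∞)`:
`T̄_s(x) = E[(X-x)_+^{s-1}] / E[X^{s-1}]` (for `s = 1` this is the survival function). -/
noncomputable def iterTail (g : ℝ → ℝ) (s : ℕ) (x : ℝ) : ℝ :=
  (∫ t in Set.Ioi x, (t - x) ^ (s - 1) * g t) /
    (∫ t in Set.Ioi (0 : ℝ), t ^ (s - 1) * g t)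

noncomputable def tailMoment (g : ℝ → ℝ) (k : ℕ) (x : ℝ) : ℝ :=
  ∫ t in Ioi x, (t - x) ^ k * g t

lemma iterTail_succ (g : ℝ → ℝ) (k : ℕ) (x : ℝ) :
    iterTail g (k + 1) x = tailMoment g k x / tailMoment g k 0 := by
  simp [iterTail, tailMoment]

lemma integral_Ioi_indicator_Iio_sub_pow (k : ℕ) {x t : ℝ} (hxt : x ≤ t) :
    ∫ u in Ioi x, (Iio t).indicator (fun u => (t - u) ^ k) u = (t - x) ^ (k + 1) / (k + 1) := by
  rw [setIntegral_indicator measurableSet_Iio, Ioi_inter_Iio, ← integral_Ioc_eq_integral_Ioo,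
    ← intervalIntegral.integral_of_le hxt,
    intervalIntegral.integral_comp_sub_left (fun w => w ^ k) t, integral_pow]
  simp

section TailMoment

variable {g : ℝ → ℝ} {k : ℕ} {x : ℝ}

lemma tailMoment_nonneg (hg : ∀ t, 0 ≤ g t) (k : ℕ) (x : ℝ) : 0 ≤ tailMoment g k x :=
  setIntegral_nonneg measurableSet_Ioi fun t ht =>
    mul_nonneg (pow_nonneg (sub_nonneg.2 (le_of_lt ht)) k) (hg t)

lemma aestronglyMeasurable_restrict_Ioi
    (hmom : ∀ k : ℕ, IntegrableOn (fun t => t ^ k * g t) (Ioi 0)) (hx : 0 ≤ x) : AEStronglyMeasurable g (volume.restrict (Ioi x)) := by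
  have h0 : AEStronglyMeasurable g (volume.restrict (Ioi 0)) := by
    simpa using (hmom 0).aestronglyMeasurable
  exact h0.mono_measure (Measure.restrict_mono (Ioi_subset_Ioi hx) le_rfl)

lemma integrableOn_sub_pow_mul (hmom : ∀ k : ℕ, IntegrableOn (fun t => t ^ k * g t) (Ioi 0))
    (k : ℕ) (hx : 0 ≤ x) : IntegrableOn (fun t => (t - x) ^ k * g t) (Ioi x) := by
  refine Integrable.mono ((hmom k).mono_set (Ioi_subset_Ioi hx))
    ((((continuous_id.sub continuous_const).pow k).aestronglyMeasurable).mul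
      (aestronglyMeasurable_restrict_Ioi hmom hx)) ?_
  filter_upwards [ae_restrict_mem measurableSet_Ioi] with t (ht : x < t)
  simp only [norm_mul, norm_pow, Real.norm_eq_abs]
  gcongr
  linarith

lemma tailMoment_eq_zero_iff (hg : ∀ t, 0 ≤ g t)
    (hmom : ∀ k : ℕ, IntegrableOn (fun t => t ^ k * g t) (Ioi 0)) (k : ℕ) (hx : 0 ≤ x) :
    tailMoment g k x = 0 ↔ g =ᵐ[volume.restrict (Ioi x)] 0 := by
  have hnonneg : 0 ≤ᵐ[volume.restrict (Ioi x)] fun t => (t - x) ^ k * g t := by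
    filter_upwards [ae_restrict_mem measurableSet_Ioi] with t (ht : x < t)
    exact mul_nonneg (pow_nonneg (by linarith) k) (hg t)
  rw [tailMoment, integral_eq_zero_iff_of_nonneg_ae hnonneg (integrableOn_sub_pow_mul hmom k hx)]
  refine Filter.eventually_congr ?_
  filter_upwards [ae_restrict_mem measurableSet_Ioi] with t (ht : x < t)
  simp [sub_ne_zero.2 ht.ne']

lemma tailMoment_pos_of_pos (hg : ∀ t, 0 ≤ g t)
    (hmom : ∀ k : ℕ, IntegrableOn (fun t => t ^ k * g t) (Ioi 0)) {j : ℕ} (k : ℕ) (hx : 0 ≤ x)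
    (h : 0 < tailMoment g j x) : 0 < tailMoment g k x := by
  refine (tailMoment_nonneg hg k x).lt_of_ne fun h0 => h.ne' ?_
  rw [tailMoment_eq_zero_iff hg hmom j hx, ← tailMoment_eq_zero_iff hg hmom k hx, ← h0]

noncomputable def tailKernel (g : ℝ → ℝ) (k : ℕ) (p : ℝ × ℝ) : ℝ :=
  {q : ℝ × ℝ | q.2 < q.1}.indicator (fun q => (q.1 - q.2) ^ k) p * g p.1

lemma tailKernel_mk_eq_indicator_Iio (t u : ℝ) :
    tailKernel g k (t, u) = (Iio t).indicator (fun u => (t - u) ^ k) u * g t := by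
  simp [tailKernel, indicator_apply]

lemma tailKernel_mk_eq_indicator_Ioi (t u : ℝ) :
    tailKernel g k (t, u) = (Ioi u).indicator (fun t => (t - u) ^ k * g t) t := by
  simp [tailKernel, indicator_apply]

lemma tailKernel_nonneg (hg : ∀ t, 0 ≤ g t) (k : ℕ) (p : ℝ × ℝ) : 0 ≤ tailKernel g k p := by
  rcases p with ⟨t, u⟩
  rw [tailKernel_mk_eq_indicator_Ioi]
  exact indicator_nonneg (fun t (ht : u < t) => mul_nonneg (pow_nonneg (by linarith) k) (hg t)) t

lemma integral_tailKernel_left (k : ℕ) {t : ℝ} (hxt : x ≤ t) :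
    ∫ u in Ioi x, tailKernel g k (t, u) = (t - x) ^ (k + 1) / (k + 1) * g t := by
  simp only [tailKernel_mk_eq_indicator_Iio]
  rw [integral_mul_const, integral_Ioi_indicator_Iio_sub_pow k hxt]

lemma integral_tailKernel_right (k : ℕ) {u : ℝ} (hxu : x ≤ u) :
    ∫ t in Ioi x, tailKernel g k (t, u) = tailMoment g k u := by
  simp only [tailKernel_mk_eq_indicator_Ioi]
  rw [setIntegral_indicator measurableSet_Ioi, Ioi_inter_Ioi, sup_eq_right.2 hxu, tailMoment]

lemma integrable_tailKernel (hg : ∀ t, 0 ≤ g t)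
    (hmom : ∀ k : ℕ, IntegrableOn (fun t => t ^ k * g t) (Ioi 0)) (k : ℕ) (hx : 0 ≤ x) :
    Integrable (tailKernel g k) ((volume.restrict (Ioi x)).prod (volume.restrict (Ioi x))) := by
  have hmeas : AEStronglyMeasurable (tailKernel g k)
      ((volume.restrict (Ioi x)).prod (volume.restrict (Ioi x))) :=
    ((((continuous_fst.sub continuous_snd).pow k).aestronglyMeasurable).indicator
      (measurableSet_lt measurable_snd measurable_fst)).mul
      (aestronglyMeasurable_restrict_Ioi hmom hx).comp_fst
  refine (integrable_prod_iff hmeas).2 ⟨?_, ?_⟩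
  · filter_upwards [ae_restrict_mem measurableSet_Ioi] with t (ht : x < t)
    simp only [tailKernel_mk_eq_indicator_Iio]
    refine Integrable.mul_const ((integrable_indicator_iff measurableSet_Iio).2 ?_) _
    rw [IntegrableOn, Measure.restrict_restrict measurableSet_Iio, Iio_inter_Ioi]
    exact ((continuous_const.sub continuous_id).pow k).integrableOn_Icc.mono_set
      Ioo_subset_Icc_self
  · refine ((integrableOn_sub_pow_mul hmom (k + 1) hx).div_const ((k : ℝ) + 1)).congr ?_
    filter_upwards [ae_restrict_mem measurableSet_Ioi] with t (ht : x < t)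
    simp only [Real.norm_of_nonneg (tailKernel_nonneg hg k _), integral_tailKernel_left k ht.le]
    ring

lemma integrableOn_tailMoment (hg : ∀ t, 0 ≤ g t)
    (hmom : ∀ k : ℕ, IntegrableOn (fun t => t ^ k * g t) (Ioi 0)) (k : ℕ) (hx : 0 ≤ x) :
    IntegrableOn (tailMoment g k) (Ioi x) := by
  refine (integrable_tailKernel hg hmom k hx).integral_prod_right.congr ?_
  filter_upwards [ae_restrict_mem measurableSet_Ioi] with u (hu : x < u)
  exact integral_tailKernel_right k hu.le

lemma tailMoment_succ (hg : ∀ t, 0 ≤ g t)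
    (hmom : ∀ k : ℕ, IntegrableOn (fun t => t ^ k * g t) (Ioi 0)) (k : ℕ) (hx : 0 ≤ x) :
    tailMoment g (k + 1) x = (k + 1) * ∫ u in Ioi x, tailMoment g k u := by
  have hswap := integral_integral_swap (f := fun t u => tailKernel g k (t, u))
    (integrable_tailKernel hg hmom k hx)
  have hleft : ∫ t in Ioi x, ∫ u in Ioi x, tailKernel g k (t, u)
      = tailMoment g (k + 1) x / (k + 1) := by
    rw [tailMoment, ← integral_div]
    refine setIntegral_congr_fun measurableSet_Ioi fun t (ht : x < t) => ?_
    rw [integral_tailKernel_left k ht.le]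
    ring
  have hright : ∫ u in Ioi x, ∫ t in Ioi x, tailKernel g k (t, u)
      = ∫ u in Ioi x, tailMoment g k u :=
    setIntegral_congr_fun measurableSet_Ioi fun u (hu : x < u) => integral_tailKernel_right k hu.le
  rw [← hright, ← hswap, hleft]
  field_simp

lemma tailMoment_zero_pos (hg : ∀ t, 0 ≤ g t)
    (hmom : ∀ k : ℕ, IntegrableOn (fun t => t ^ k * g t) (Ioi 0))
    (hmass : 0 < ∫ t in Ioi (0 : ℝ), g t) (k : ℕ) : 0 < tailMoment g k 0 :=
  tailMoment_pos_of_pos hg hmom (j := 0) k le_rfl (by simpa [tailMoment] using hmass)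

end TailMoment

lemma setIntegral_Ioi_mul_le {f g : ℝ → ℝ} {x y : ℝ} (hxy : x ≤ y)
    (hf : IntegrableOn f (Ioi x)) (hg : IntegrableOn g (Ioi x))
    (hcross : ∀ u ∈ Ioi x, ∀ v ∈ Ioi x, u ≤ v → f u * g v ≤ f v * g u) :
    (∫ u in Ioi x, f u) * (∫ v in Ioi y, g v) ≤ (∫ v in Ioi y, f v) * (∫ u in Ioi x, g u) := by
  have hsplit : ∀ φ : ℝ → ℝ, IntegrableOn φ (Ioi x) →
      ∫ u in Ioi x, φ u = (∫ u in Ioc x y, φ u) + ∫ u in Ioi y, φ u := fun φ hφ => by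
    rw [← setIntegral_union (Ioc_disjoint_Ioi le_rfl) measurableSet_Ioi
      (hφ.mono_set Ioc_subset_Ioi_self) (hφ.mono_set (Ioi_subset_Ioi hxy)),
      Ioc_union_Ioi_eq_Ioi hxy]
  have hprod : (∫ u in Ioc x y, f u) * (∫ v in Ioi y, g v)
      ≤ (∫ u in Ioc x y, g u) * (∫ v in Ioi y, f v) := by
    rw [← integral_prod_mul, ← integral_prod_mul]
    refine integral_mono_ae ((hf.mono_set Ioc_subset_Ioi_self).mul_prod
        (hg.mono_set (Ioi_subset_Ioi hxy)))
      ((hg.mono_set Ioc_subset_Ioi_self).mul_prod (hf.mono_set (Ioi_subset_Ioi hxy))) ?_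
    rw [Measure.prod_restrict]
    filter_upwards [ae_restrict_mem (measurableSet_Ioc.prod measurableSet_Ioi)]
      with p ⟨⟨hxp, hpy⟩, (hyp : y < p.2)⟩
    have := hcross p.1 hxp p.2 (hxy.trans_lt hyp) (hpy.trans hyp.le)
    linarith
  rw [hsplit f hf, hsplit g hg]
  linarith

lemma monotoneOn_div_div_iff {f g : ℝ → ℝ} {S : Set ℝ} {a b : ℝ} (ha : 0 < a) (hb : 0 < b)
    (hg : ∀ x ∈ S, 0 < g x) :
    MonotoneOn (fun x => (f x / a) / (g x / b)) S ↔
      ∀ u ∈ S, ∀ v ∈ S, u ≤ v → f u * g v ≤ f v * g u := by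
  have hratio : ∀ x, (f x / a) / (g x / b) = b / a * (f x / g x) := fun x => by
    simp only [div_eq_mul_inv, mul_inv, inv_inv]; ring
  simp only [MonotoneOn, hratio, mul_le_mul_iff_right₀ (div_pos hb ha)]
  exact forall₂_congr fun u hu => forall₂_congr fun v hv =>
    imp_congr_right fun _ => div_le_div_iff₀ (hg u hu) (hg v hv)

lemma pos_of_monotoneOn_div_div {f g : ℝ → ℝ} {u : ℝ} (hf : f 0 ≠ 0) (hg : g 0 ≠ 0)
    (hgu : 0 ≤ g u) (hmono : MonotoneOn (fun x => (f x / f 0) / (g x / g 0)) (Ici 0))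
    (hu : 0 ≤ u) : 0 < g u := by
  refine hgu.lt_of_ne fun hgu0 => ?_
  -- the ratio is `1` at `0` but would be `0` at a zero of `g`, since `x / 0 = 0`
  have := hmono (mem_Ici.2 le_rfl) hu hu
  norm_num [← hgu0, hf, hg] at this

lemma tailMoment_succ_mul_le {f g : ℝ → ℝ} (hf : ∀ t, 0 ≤ f t)
    (hfm : ∀ k : ℕ, IntegrableOn (fun t => t ^ k * f t) (Ioi 0)) (hg : ∀ t, 0 ≤ g t)
    (hgm : ∀ k : ℕ, IntegrableOn (fun t => t ^ k * g t) (Ioi 0)) {k : ℕ}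
    (hcross : ∀ u ∈ Ici (0 : ℝ), ∀ v ∈ Ici 0, u ≤ v →
      tailMoment f k u * tailMoment g k v ≤ tailMoment f k v * tailMoment g k u) :
    ∀ x ∈ Ici (0 : ℝ), ∀ y ∈ Ici 0, x ≤ y →
      tailMoment f (k + 1) x * tailMoment g (k + 1) y
        ≤ tailMoment f (k + 1) y * tailMoment g (k + 1) x := by
  intro x (hx : 0 ≤ x) y (hy : 0 ≤ y) hxy
  rw [tailMoment_succ hf hfm k hx, tailMoment_succ hf hfm k hy, tailMoment_succ hg hgm k hx,
    tailMoment_succ hg hgm k hy, mul_mul_mul_comm, mul_mul_mul_comm _ _ ((k : ℝ) + 1)]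
  refine mul_le_mul_of_nonneg_left (setIntegral_Ioi_mul_le hxy (integrableOn_tailMoment hf hfm k hx)
    (integrableOn_tailMoment hg hgm k hx) fun u (hu : x < u) v _ huv => ?_) (by positivity)
  exact hcross u (hx.trans hu.le) v (hx.trans (hu.le.trans huv)) huv

/-- The s-FR order is hereditary in the iteration step: if `T̄_{Y,s}/T̄_{X,s}` is
nondecreasing on `[0,∞)`, then so is `T̄_{Y,s+1}/T̄_{X,s+1}`. -/
theorem sFR_hereditary
    (fX fY : ℝ → ℝ) (hX_nonneg : ∀ t, 0 ≤ fX t) (hY_nonneg : ∀ t, 0 ≤ fY t)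
    (hX_prob : ∫ t in Ioi (0 : ℝ), fX t = 1) (hY_prob : ∫ t in Ioi (0 : ℝ), fY t = 1)
    (hX_mom : ∀ k : ℕ, IntegrableOn (fun t => t ^ k * fX t) (Ioi 0))
    (hY_mom : ∀ k : ℕ, IntegrableOn (fun t => t ^ k * fY t) (Ioi 0))
    (s : ℕ) (hs : 1 ≤ s)
    (h : MonotoneOn (fun x => iterTail fY s x / iterTail fX s x) (Ici 0)) :
    MonotoneOn (fun x => iterTail fY (s + 1) x / iterTail fX (s + 1) x) (Ici 0) := by
  obtain ⟨r, rfl⟩ := Nat.exists_eq_add_of_le' hs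
  have hY0 := tailMoment_zero_pos hY_nonneg hY_mom (by rw [hY_prob]; exact one_pos)
  have hX0 := tailMoment_zero_pos hX_nonneg hX_mom (by rw [hX_prob]; exact one_pos)
  simp only [iterTail_succ] at h ⊢
  have hXpos : ∀ u ∈ Ici (0 : ℝ), 0 < tailMoment fX r u := fun u hu =>
    pos_of_monotoneOn_div_div (hY0 r).ne' (hX0 r).ne' (tailMoment_nonneg hX_nonneg r u) h hu
  rw [monotoneOn_div_div_iff (hY0 r) (hX0 r) hXpos] at h
  rw [monotoneOn_div_div_iff (hY0 _) (hX0 _)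
    fun u (hu : u ∈ Ici 0) => tailMoment_pos_of_pos hX_nonneg hX_mom _ hu (hXpos u hu)]
  exact tailMoment_succ_mul_le hY_nonneg hY_mom hX_nonneg hX_mom h
end

section
/- Let X ~ Gamma(α, 1) with arbitrary shape α > 0. Then for each fixed x ≥ 0, lim_{s→∞} T̄_s(x) = e^{−x}, where T̄_s is the s-iterated tail induced by X. -/
open MeasureTheory Set Real Filter

/-! By the mean value theorem, `t ^ (a - 1)` differs from `(t - x) ^ (a - 1)` by at most
`|a - 1| x ((t - x) ^ (a - 2) + t ^ (a - 2))` on `t > x ≥ 0`. Replacing it therefore turns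
`∫_x^∞ (t - x) ^ (s - 1) t ^ (a - 1) e^{-t} dt` into `e^{-x} Γ(a + s - 1)` at the cost of an error
`2 |a - 1| x Γ(a + s - 2)`, and `Γ(a + s - 1) = (a + s - 2) Γ(a + s - 2)` makes the relative error
`O(1 / s)`. -/

/-- Tail of the s-iterated distribution induced by `Gamma(α, 1)` with real shape `α > 0`:
`T̄_s(x) = (1/Γ(α+s-1)) ∫_x^∞ (t-x)^{s-1} t^{α-1} e^{-t} dt`. -/
noncomputable def gammaIterTail (a : ℝ) (s : ℕ) (x : ℝ) : ℝ :=
  (∫ t in Set.Ioi x, (t - x) ^ (s - 1) * (t ^ (a - 1) * Real.exp (-t))) /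
    Real.Gamma (a + (s : ℝ) - 1)

lemma preimage_add_right_Ioi_self (x : ℝ) : (· + x) ⁻¹' Ioi x = Ioi (0 : ℝ) := by
  ext; simp

lemma setIntegral_Ioi_eq_setIntegral_Ioi_zero_add (x : ℝ) (f : ℝ → ℝ) :
    ∫ t in Ioi x, f t = ∫ u in Ioi 0, f (u + x) := by
  rw [← preimage_add_right_Ioi_self,
    (measurePreserving_add_right volume x).setIntegral_preimage_emb
      (measurableEmbedding_addRight x)]

lemma integrableOn_Ioi_iff_integrableOn_Ioi_zero_add (x : ℝ) (f : ℝ → ℝ) :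
    IntegrableOn f (Ioi x) ↔ IntegrableOn (fun u => f (u + x)) (Ioi 0) := by
  rw [← preimage_add_right_Ioi_self x,
    ← (measurePreserving_add_right volume x).integrableOn_comp_preimage
      (measurableEmbedding_addRight x)]
  rfl

lemma add_sub_cancel_rpow_mul_exp_neg_add (x u q : ℝ) :
    (u + x - x) ^ q * exp (-(u + x)) = exp (-x) * (exp (-u) * u ^ (q + 1 - 1)) := by
  rw [add_sub_cancel_right, add_sub_cancel_right, neg_add, exp_add]
  ring

theorem integrableOn_Ioi_sub_rpow_mul_exp_neg (x : ℝ) {q : ℝ} (hq : -1 < q) :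
    IntegrableOn (fun t => (t - x) ^ q * exp (-t)) (Ioi x) := by
  rw [integrableOn_Ioi_iff_integrableOn_Ioi_zero_add]
  simp only [add_sub_cancel_rpow_mul_exp_neg_add]
  exact (GammaIntegral_convergent (by linarith)).const_mul _

theorem integral_Ioi_sub_rpow_mul_exp_neg (x : ℝ) {q : ℝ} (hq : -1 < q) :
    ∫ t in Ioi x, (t - x) ^ q * exp (-t) = exp (-x) * Gamma (q + 1) := by
  rw [setIntegral_Ioi_eq_setIntegral_Ioi_zero_add, Gamma_eq_integral (by linarith),
    ← integral_const_mul]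
  simp only [add_sub_cancel_rpow_mul_exp_neg_add]

theorem abs_rpow_sub_rpow_le {b c : ℝ} (hb : 0 < b) (hbc : b ≤ c) (p : ℝ) :
    |c ^ p - b ^ p| ≤ |p| * (b ^ (p - 1) + c ^ (p - 1)) * (c - b) := by
  have hderiv : ∀ y ∈ Icc b c, HasDerivWithinAt (· ^ p) (p * y ^ (p - 1)) (Icc b c) y :=
    fun y hy => (hasDerivAt_rpow_const (Or.inl (hb.trans_le hy.1).ne')).hasDerivWithinAt
  have hbound : ∀ y ∈ Icc b c, ‖p * y ^ (p - 1)‖ ≤ |p| * (b ^ (p - 1) + c ^ (p - 1)) := by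
    intro y ⟨hby, hyc⟩
    have hy : 0 < y := hb.trans_le hby
    rw [norm_mul, norm_of_nonneg (rpow_nonneg hy.le _), Real.norm_eq_abs]
    gcongr
    have := rpow_nonneg hb.le (p - 1)
    have := rpow_nonneg (hb.trans_le hbc).le (p - 1)
    rcases le_total (p - 1) 0 with hp | hp
    · linarith [rpow_le_rpow_of_nonpos hb hby hp]
    · linarith [rpow_le_rpow hy.le hyc hp]
  simpa [Real.norm_eq_abs, abs_of_nonneg (sub_nonneg.2 hbc)] using
    (convex_Icc b c).norm_image_sub_le_of_norm_hasDerivWithin_le hderiv hbound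
      (left_mem_Icc.2 hbc) (right_mem_Icc.2 hbc)

section

variable {x r q : ℝ}

lemma sub_rpow_mul_rpow_mul_exp_neg_nonneg (hx : 0 ≤ x) {t : ℝ} (ht : x < t) :
    0 ≤ (t - x) ^ r * (t ^ q * exp (-t)) := by
  have ht0 : 0 ≤ t := hx.trans ht.le
  have := sub_nonneg.2 ht.le
  positivity

lemma sub_rpow_mul_rpow_mul_exp_neg_le (hx : 0 ≤ x) (hr : 0 ≤ r) {t : ℝ} (ht : x < t) :
    (t - x) ^ r * (t ^ q * exp (-t)) ≤ exp (-t) * t ^ (r + q) := by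
  have ht0 : 0 < t := hx.trans_lt ht
  calc (t - x) ^ r * (t ^ q * exp (-t)) ≤ t ^ r * (t ^ q * exp (-t)) := by
        gcongr
        linarith
    _ = exp (-t) * t ^ (r + q) := by rw [rpow_add ht0]; ring

theorem integrableOn_Ioi_sub_rpow_mul_rpow_mul_exp_neg (hx : 0 ≤ x) (hr : 0 ≤ r)
    (hrq : -1 < r + q) :
    IntegrableOn (fun t => (t - x) ^ r * (t ^ q * exp (-t))) (Ioi x) := by
  have hΓ : IntegrableOn (fun t => exp (-t) * t ^ (r + q)) (Ioi x) := by
    simpa using (GammaIntegral_convergent (by linarith : 0 < r + q + 1)).mono_set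
      (Ioi_subset_Ioi hx)
  refine hΓ.mono' (by fun_prop) ?_
  filter_upwards [ae_restrict_mem measurableSet_Ioi] with t ht
  rw [norm_of_nonneg (sub_rpow_mul_rpow_mul_exp_neg_nonneg hx ht)]
  exact sub_rpow_mul_rpow_mul_exp_neg_le hx hr ht

theorem integral_Ioi_sub_rpow_mul_rpow_mul_exp_neg_le_Gamma (hx : 0 ≤ x) (hr : 0 ≤ r)
    (hrq : -1 < r + q) :
    ∫ t in Ioi x, (t - x) ^ r * (t ^ q * exp (-t)) ≤ Gamma (r + q + 1) := by
  have hΓ := GammaIntegral_convergent (by linarith : 0 < r + q + 1)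
  rw [add_sub_cancel_right] at hΓ
  calc ∫ t in Ioi x, (t - x) ^ r * (t ^ q * exp (-t))
      ≤ ∫ t in Ioi x, exp (-t) * t ^ (r + q) :=
        setIntegral_mono_on (integrableOn_Ioi_sub_rpow_mul_rpow_mul_exp_neg hx hr hrq)
          (hΓ.mono_set (Ioi_subset_Ioi hx)) measurableSet_Ioi
          fun t ht => sub_rpow_mul_rpow_mul_exp_neg_le hx hr ht
    _ ≤ ∫ t in Ioi 0, exp (-t) * t ^ (r + q) := by
        refine setIntegral_mono_set hΓ ?_ (Ioi_subset_Ioi hx).eventuallyLE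
        filter_upwards [ae_restrict_mem measurableSet_Ioi] with t ht
        have : (0 : ℝ) ≤ t := le_of_lt ht
        positivity
    _ = Gamma (r + q + 1) := by rw [Gamma_eq_integral (by linarith), add_sub_cancel_right]

lemma abs_sub_rpow_mul_rpow_mul_exp_neg_sub_le (hx : 0 ≤ x) {t : ℝ} (ht : x < t) :
    |(t - x) ^ r * (t ^ q * exp (-t)) - (t - x) ^ (r + q) * exp (-t)| ≤
      |q| * x * ((t - x) ^ r * (t ^ (q - 1) * exp (-t)) + (t - x) ^ (r + q - 1) * exp (-t)) := by
  have hb : 0 < t - x := sub_pos.2 ht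
  have hw : 0 ≤ (t - x) ^ r * exp (-t) := by positivity
  have hmvt := abs_rpow_sub_rpow_le hb (by linarith : t - x ≤ t) q
  rw [sub_sub_cancel] at hmvt
  calc |(t - x) ^ r * (t ^ q * exp (-t)) - (t - x) ^ (r + q) * exp (-t)|
      = (t - x) ^ r * exp (-t) * |t ^ q - (t - x) ^ q| := by
        rw [rpow_add hb, ← abs_of_nonneg hw, ← abs_mul]
        ring_nf
    _ ≤ (t - x) ^ r * exp (-t) * (|q| * ((t - x) ^ (q - 1) + t ^ (q - 1)) * x) := by gcongr
    _ = _ := by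
        rw [show r + q - 1 = r + (q - 1) by ring, rpow_add hb]
        ring

theorem abs_integral_Ioi_sub_rpow_mul_rpow_mul_exp_neg_sub_le (hx : 0 ≤ x) (hr : 0 ≤ r)
    (hrq : 0 < r + q) :
    |(∫ t in Ioi x, (t - x) ^ r * (t ^ q * exp (-t))) - exp (-x) * Gamma (r + q + 1)| ≤
      2 * |q| * x * Gamma (r + q) := by
  have hf := integrableOn_Ioi_sub_rpow_mul_rpow_mul_exp_neg (q := q) hx hr (by linarith)
  have hg := integrableOn_Ioi_sub_rpow_mul_exp_neg x (by linarith : -1 < r + q)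
  have hf' := integrableOn_Ioi_sub_rpow_mul_rpow_mul_exp_neg (q := q - 1) hx hr (by linarith)
  have hg' := integrableOn_Ioi_sub_rpow_mul_exp_neg x (by linarith : -1 < r + q - 1)
  have hf'_le : ∫ t in Ioi x, (t - x) ^ r * (t ^ (q - 1) * exp (-t)) ≤ Gamma (r + q) := by
    have := integral_Ioi_sub_rpow_mul_rpow_mul_exp_neg_le_Gamma (q := q - 1) hx hr
      (by linarith)
    rwa [add_sub_assoc', sub_add_cancel] at this
  have hg'_le : ∫ t in Ioi x, (t - x) ^ (r + q - 1) * exp (-t) ≤ Gamma (r + q) := by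
    rw [integral_Ioi_sub_rpow_mul_exp_neg x (by linarith), sub_add_cancel]
    exact mul_le_of_le_one_left (Gamma_pos_of_pos hrq).le (exp_le_one_iff.2 (by linarith))
  rw [← integral_Ioi_sub_rpow_mul_exp_neg x (by linarith), ← integral_sub hf hg]
  calc _ ≤ ∫ t in Ioi x, |(t - x) ^ r * (t ^ q * exp (-t)) - (t - x) ^ (r + q) * exp (-t)| :=
        abs_integral_le_integral_abs
    _ ≤ ∫ t in Ioi x, |q| * x *
          ((t - x) ^ r * (t ^ (q - 1) * exp (-t)) + (t - x) ^ (r + q - 1) * exp (-t)) :=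
        setIntegral_mono_on (hf.sub hg).abs ((hf'.add hg').const_mul _) measurableSet_Ioi
          fun t ht => abs_sub_rpow_mul_rpow_mul_exp_neg_sub_le hx ht
    _ = |q| * x * ((∫ t in Ioi x, (t - x) ^ r * (t ^ (q - 1) * exp (-t))) +
          ∫ t in Ioi x, (t - x) ^ (r + q - 1) * exp (-t)) := by
        rw [integral_const_mul, integral_add hf' hg']
    _ ≤ |q| * x * (Gamma (r + q) + Gamma (r + q)) := by gcongr
    _ = 2 * |q| * x * Gamma (r + q) := by ring

end

theorem abs_gammaIterTail_sub_exp_neg_le {a x : ℝ} (ha : 0 < a) (hx : 0 ≤ x) {s : ℕ}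
    (hs : 2 ≤ s) :
    |gammaIterTail a s x - exp (-x)| ≤ 2 * |a - 1| * x / (a + s - 2) := by
  have hs' : (2 : ℝ) ≤ s := by exact_mod_cast hs
  have hp : 0 < a + s - 2 := by linarith
  have hΓ : 0 < Gamma (a + s - 2) := Gamma_pos_of_pos hp
  have hbound := abs_integral_Ioi_sub_rpow_mul_rpow_mul_exp_neg_sub_le (q := a - 1) hx
    (r := (s : ℝ) - 1) (by linarith) (by linarith)
  have hexp : ((s - 1 : ℕ) : ℝ) = (s : ℝ) - 1 := by
    rw [Nat.cast_sub (by omega), Nat.cast_one]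
  have hint : ∫ t in Ioi x, (t - x) ^ (s - 1) * (t ^ (a - 1) * exp (-t)) =
      ∫ t in Ioi x, (t - x) ^ ((s : ℝ) - 1) * (t ^ (a - 1) * exp (-t)) := by
    simp only [← hexp, rpow_natCast]
  have hrec : Gamma (a + s - 1) = (a + s - 2) * Gamma (a + s - 2) := by
    rw [← Gamma_add_one hp.ne']; ring_nf
  rw [show (s : ℝ) - 1 + (a - 1) = a + s - 2 by ring,
    show a + s - 2 + 1 = a + (s : ℝ) - 1 by ring, ← hint] at hbound
  have hΓ' : 0 < Gamma (a + s - 1) := by rw [hrec]; positivity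
  calc |gammaIterTail a s x - exp (-x)|
      = |(∫ t in Ioi x, (t - x) ^ (s - 1) * (t ^ (a - 1) * exp (-t))) -
          exp (-x) * Gamma (a + s - 1)| / Gamma (a + s - 1) := by
        rw [gammaIterTail, div_sub' hΓ'.ne', abs_div, abs_of_pos hΓ', mul_comm]
    _ ≤ 2 * |a - 1| * x * Gamma (a + s - 2) / Gamma (a + s - 1) := by gcongr
    _ = 2 * |a - 1| * x / (a + s - 2) := by
        rw [hrec, mul_comm (a + (s : ℝ) - 2), ← div_div, mul_div_cancel_right₀ _ hΓ.ne']

/-- For `X ~ Gamma(α, 1)` with arbitrary shape `α > 0`, the s-iterated tail converges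
pointwise to `e^{-x}` as `s → ∞`. -/
theorem iterated_gamma_tail_tendsto_exp (a : ℝ) (ha : 0 < a) (x : ℝ) (hx : 0 ≤ x) :
    Tendsto (fun s : ℕ => gammaIterTail a s x) atTop (nhds (Real.exp (-x))) := by
  have hrate : Tendsto (fun s : ℕ => 2 * |a - 1| * x / (a + s - 2)) atTop (nhds 0) := by
    refine tendsto_const_nhds.div_atTop ?_
    simpa only [add_sub_right_comm] using
      tendsto_atTop_add_const_left _ _ tendsto_natCast_atTop_atTop
  rw [tendsto_iff_norm_sub_tendsto_zero]
  refine squeeze_zero' (Eventually.of_forall fun _ => norm_nonneg _) ?_ hrate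
  filter_upwards [eventually_ge_atTop 2] with s hs
  exact abs_gammaIterTail_sub_exp_neg_le ha hx hs
end

section
/- For fixed α > 0, the sequence A(s) = s·Γ(1 + (s−1)/α) / Γ(1 + s/α) converges to 0 as s → ∞ when α < 1. -/
/-!
Log-convexity of `Γ` between `x` and `x + p`, evaluated at `x + 1` where `Γ(x + 1) = x Γ(x)`,
gives `x ^ p Γ(x) ≤ Γ(x + p)` for `p ≥ 1`. With `x = 1 + (s-1)/α ≥ s` and `p = 1/α` this bounds
`A(s)` by `s ^ (1 - 1/α)`, which tends to `0` since `1/α > 1`.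
-/

open Real Filter Set

theorem Real.rpow_mul_Gamma_le_Gamma_add {x p : ℝ} (hx : 0 < x) (hp : 1 ≤ p) :
    x ^ p * Gamma x ≤ Gamma (x + p) := by
  have hp0 : 0 < p := by linarith
  have hxp : 0 < x + p := by linarith
  have hconv := convexOn_log_Gamma.2 (mem_Ioi.2 hx) (mem_Ioi.2 hxp)
    (sub_nonneg.2 (inv_le_one_of_one_le₀ hp)) (inv_nonneg.2 hp0.le) (sub_add_cancel 1 p⁻¹)
  have harg : (1 - p⁻¹) • x + p⁻¹ • (x + p) = x + 1 := by
    simp only [smul_eq_mul]; field_simp; ring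
  rw [harg] at hconv
  simp only [Function.comp_apply, smul_eq_mul, Gamma_add_one hx.ne',
    log_mul hx.ne' (Gamma_pos_of_pos hx).ne'] at hconv
  have hlog : log (x ^ p * Gamma x) ≤ log (Gamma (x + p)) := by
    rw [log_mul (by positivity) (Gamma_pos_of_pos hx).ne', log_rpow hx]
    have := mul_le_mul_of_nonneg_left hconv hp0.le
    field_simp at this
    linarith
  exact (log_le_log_iff (by positivity) (Gamma_pos_of_pos hxp)).1 hlog

theorem mul_Gamma_div_Gamma_le_rpow {a s : ℝ} (ha0 : 0 < a) (ha1 : a ≤ 1) (hs : 1 ≤ s) :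
    s * Gamma (1 + (s - 1) / a) / Gamma (1 + s / a) ≤ s ^ (1 - 1 / a) := by
  set x := 1 + (s - 1) / a
  have hsx : s ≤ x := by
    have : s - 1 ≤ (s - 1) / a := le_div_self (by linarith) ha0 ha1
    linarith
  have hx : 0 < x := by linarith
  have hshift : 1 + s / a = x + 1 / a := by simp only [x]; field_simp; ring
  rw [hshift, div_le_iff₀ (Gamma_pos_of_pos (by positivity))]
  calc s * Gamma x = s ^ (1 - 1 / a) * s ^ (1 / a) * Gamma x := by
        rw [← rpow_add (by linarith), sub_add_cancel, rpow_one]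
    _ ≤ s ^ (1 - 1 / a) * (x ^ (1 / a) * Gamma x) := by
        rw [mul_assoc]; gcongr
    _ ≤ s ^ (1 - 1 / a) * Gamma (x + 1 / a) := by
        gcongr; exact rpow_mul_Gamma_le_Gamma_add hx ((one_le_div ha0).2 ha1)

/-- For fixed `0 < α < 1`, the sequence `A(s) = s Γ(1 + (s-1)/α) / Γ(1 + s/α)`
converges to 0 as `s → ∞`. -/
theorem gamma_ratio_tendsto_zero (a : ℝ) (ha0 : 0 < a) (ha1 : a < 1) :
    Tendsto (fun s : ℕ =>
      (s : ℝ) * Real.Gamma (1 + ((s : ℝ) - 1) / a) / Real.Gamma (1 + (s : ℝ) / a))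
      atTop (nhds 0) := by
  have hexp : 1 - 1 / a < 0 := by
    rw [sub_neg, one_lt_div ha0]; exact ha1
  have hbound : Tendsto (fun s : ℕ => (s : ℝ) ^ (1 - 1 / a)) atTop (nhds 0) := by
    simpa only [neg_neg, Function.comp_def] using
      (tendsto_rpow_neg_atTop (neg_pos.2 hexp)).comp tendsto_natCast_atTop_atTop
  have hs : ∀ᶠ s : ℕ in atTop, (1 : ℝ) ≤ s := by
    filter_upwards [eventually_ge_atTop 1] with s hs
    exact_mod_cast hs
  refine squeeze_zero' (hs.mono fun s hs => ?_)
    (hs.mono fun s hs => mul_Gamma_div_Gamma_le_rpow ha0 ha1.le hs) hbound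
  have : 0 ≤ ((s : ℝ) - 1) / a := div_nonneg (by linarith) ha0.le
  positivity
end
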